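/- Let n be even, 1 ≤ i ≤ n−1 and (a,b) ∈ ℂ² with (a,b) ≠ (0,0). The swap automorphism τ fixes the ideal I_i(a,b) (i.e. τ(I_i(a,b)) = I_i(a,b)) if and only if 2i = n and a² = b². Thus for even n there are exactly two τ-fixed points on the exceptional locus of ℤ_n-Hilb(ℂ²), namely I_{n/2}(1:1) and I_{n/2}(1:−1). -/

import Mathlib

open MvPolynomial

/-- The algebra automorphism `τ : x ↦ y, y ↦ x` of `ℂ[x,y]`. -/
noncomputable def tauA : MvPolynomial (Fin 2) ℂ →ₐ[ℂ] MvPolynomial (Fin 2) ℂ :=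
  aeval ![X 1, X 0]

/-- The Ito–Nakamura ideal `I_i(a,b) = ⟨a·xⁱ − b·y^{n−i}, x^{i+1}, xy, y^{n+1−i}⟩`. -/
noncomputable def itoNak (n i : ℕ) (a b : ℂ) : Ideal (MvPolynomial (Fin 2) ℂ) :=
  Ideal.span
    {C a * X 0 ^ i - C b * X 1 ^ (n - i), X 0 ^ (i + 1), X 0 * X 1, X 1 ^ (n + 1 - i)}

/-!
On the coordinate axes (`x ↦ t, y ↦ 0` and `x ↦ 0, y ↦ t`) an element `f·(a xⁱ − b y^{n−i}) + z`
of `I_i(a,b)`, with `z` in the monomial ideal `⟨x^{i+1}, xy, y^{n+1−i}⟩`, agrees with `c·a·tⁱ`,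
resp. `−c·b·t^{n−i}`, up to higher order, where `c` is the constant term of `f`. This recovers
the point `(a : b)` from the ideal and shows `y^k ∉ I_i(a,b)` for `k < n − i`.
Since `τ(I_i(a,b)) = I_{n−i}(b,a)`, comparing the pure powers of `y` in a `τ`-fixed ideal gives
`|n − 2i| ≤ 1`, so `2i = n` for even `n`, and then `(b : a) = (a : b)`, i.e. `a² = b²`.
-/

section restrictAxis

variable (R : Type*) {σ : Type*} [CommSemiring R] [DecidableEq σ]

noncomputable def restrictAxis (j : σ) : MvPolynomial σ R →ₐ[R] Polynomial R :=
  aeval (Pi.single j Polynomial.X)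

variable {R}

@[simp]
lemma restrictAxis_X_self (j : σ) : restrictAxis R j (X j) = Polynomial.X := by
  simp [restrictAxis]

@[simp]
lemma restrictAxis_X_of_ne {j k : σ} (h : k ≠ j) : restrictAxis R j (X k) = 0 := by
  simp [restrictAxis, h]

lemma coeff_zero_restrictAxis (j : σ) (f : MvPolynomial σ R) :
    (restrictAxis R j f).coeff 0 = constantCoeff f := by
  change Polynomial.constantCoeff ((restrictAxis R j : MvPolynomial σ R →+* Polynomial R) f) = _
  rw [← RingHom.comp_apply]
  congr 1
  refine ringHom_ext (fun r => by simp [restrictAxis]) (fun k => ?_)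
  by_cases hk : k = j
  · subst hk; simp
  · simp [hk]

lemma X_pow_succ_dvd_restrictAxis_sub {R : Type*} [CommRing R] {j : σ} {k : ℕ} {e : R}
    {f g z : MvPolynomial σ R}
    (hg : restrictAxis R j g = Polynomial.monomial k e)
    (hz : Polynomial.X ^ (k + 1) ∣ restrictAxis R j z) :
    Polynomial.X ^ (k + 1) ∣
      restrictAxis R j (f * g + z) - Polynomial.monomial k (constantCoeff f * e) := by
  have hf := Polynomial.X_dvd_sub_C (p := restrictAxis R j f)
  rw [coeff_zero_restrictAxis] at hf
  have hsplit : restrictAxis R j (f * g + z) - Polynomial.monomial k (constantCoeff f * e)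
      = (restrictAxis R j f - Polynomial.C (constantCoeff f)) * (Polynomial.C e * Polynomial.X ^ k)
        + restrictAxis R j z := by
    simp only [map_add, map_mul, hg, ← Polynomial.C_mul_X_pow_eq_monomial]
    ring
  rw [hsplit]
  refine dvd_add ?_ hz
  rw [pow_succ']
  exact mul_dvd_mul hf (dvd_mul_left _ _)

end restrictAxis

section ItoNakamura

variable {n i : ℕ} {a b : ℂ}

lemma sub_mem_itoNak : C a * X 0 ^ i - C b * X 1 ^ (n - i) ∈ itoNak n i a b :=
  Ideal.subset_span (by simp)

lemma X_one_pow_mem_itoNak : X 1 ^ (n + 1 - i) ∈ itoNak n i a b :=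
  Ideal.subset_span (by simp)

lemma exists_X_pow_dvd_restrictAxis_sub (hi : 1 ≤ i) (hin : i < n) {p : MvPolynomial (Fin 2) ℂ}
    (hp : p ∈ itoNak n i a b) : ∃ c : ℂ,
      Polynomial.X ^ (i + 1) ∣ restrictAxis ℂ 0 p - Polynomial.monomial i (c * a) ∧
      Polynomial.X ^ (n - i + 1) ∣
        restrictAxis ℂ 1 p - Polynomial.monomial (n - i) (c * -b) := by
  rw [itoNak, Ideal.mem_span_insert] at hp
  obtain ⟨f, z, hz, rfl⟩ := hp
  refine ⟨constantCoeff f, X_pow_succ_dvd_restrictAxis_sub ?_ ?_,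
    X_pow_succ_dvd_restrictAxis_sub ?_ ?_⟩
  · simp [zero_pow (by omega : n - i ≠ 0), Polynomial.C_mul_X_pow_eq_monomial]
  · rw [← Ideal.mem_span_singleton, ← Ideal.mem_comap]
    refine (Ideal.span_le.mpr ?_) hz
    simp [Set.insert_subset_iff, zero_pow (by omega : n + 1 - i ≠ 0)]
  · simp [zero_pow (by omega : i ≠ 0), Polynomial.C_mul_X_pow_eq_monomial]
  · rw [← Ideal.mem_span_singleton, ← Ideal.mem_comap]
    refine (Ideal.span_le.mpr ?_) hz
    simp [Set.insert_subset_iff, zero_pow (by omega : i + 1 ≠ 0),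
      (by omega : n + 1 - i = n - i + 1)]

lemma mul_eq_mul_of_mem_itoNak (hi : 1 ≤ i) (hin : i < n) {a' b' : ℂ}
    (h : C a' * X 0 ^ i - C b' * X 1 ^ (n - i) ∈ itoNak n i a b) : a' * b = a * b' := by
  obtain ⟨c, hx, hy⟩ := exists_X_pow_dvd_restrictAxis_sub hi hin h
  have ha := Polynomial.X_pow_dvd_iff.mp hx i (by omega)
  have hb := Polynomial.X_pow_dvd_iff.mp hy (n - i) (by omega)
  simp [zero_pow (by omega : n - i ≠ 0), zero_pow (by omega : i ≠ 0)] at ha hb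
  linear_combination b * ha + a * hb

lemma X_one_pow_notMem_itoNak (hi : 1 ≤ i) {k : ℕ} (hk : k < n - i) :
    X 1 ^ k ∉ itoNak n i a b := by
  intro h
  obtain ⟨c, -, hy⟩ := exists_X_pow_dvd_restrictAxis_sub hi (by omega) h
  have := Polynomial.X_pow_dvd_iff.mp hy k (by omega)
  simp [Polynomial.coeff_X_pow, Polynomial.coeff_monomial, hk.ne'] at this

lemma le_add_one_of_itoNak_eq {j : ℕ} {a' b' : ℂ} (hi : 1 ≤ i) (hjn : j ≤ n)
    (h : itoNak n j a' b' = itoNak n i a b) : j ≤ i + 1 := by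
  by_contra hlt
  have hmem : X 1 ^ (n + 1 - j) ∈ itoNak n i a b := by
    rw [← h]
    exact X_one_pow_mem_itoNak
  exact X_one_pow_notMem_itoNak hi (by omega) hmem

lemma map_tauA_itoNak (h : i ≤ n) : Ideal.map tauA (itoNak n i a b) = itoNak n (n - i) b a := by
  have tX0 : tauA (X 0) = X 1 := by simp [tauA]
  have tX1 : tauA (X 1) = X 0 := by simp [tauA]
  have tC (c : ℂ) : tauA (C c) = C c := algHom_C _ _
  rw [itoNak, Ideal.map_span, Set.image_insert_eq, Set.image_insert_eq, Set.image_insert_eq,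
    Set.image_singleton, Ideal.span_insert]
  simp only [map_sub, map_mul, map_pow, tX0, tX1, tC]
  rw [← Ideal.span_singleton_neg, neg_sub, mul_comm (X 1), ← Ideal.span_insert, itoNak,
    Nat.sub_sub_self h, (by omega : n + 1 - (n - i) = i + 1), (by omega : n + 1 - i = n - i + 1)]
  congr 1
  ext
  simp only [Set.mem_insert_iff, Set.mem_singleton_iff]
  tauto

lemma itoNak_mul_mul {c : ℂ} (hc : c ≠ 0) : itoNak n i (c * a) (c * b) = itoNak n i a b := by
  rw [itoNak, itoNak, Ideal.span_insert, C_mul, C_mul, mul_assoc, mul_assoc, ← mul_sub,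
    Ideal.span_singleton_mul_left_unit ((isUnit_iff_ne_zero.mpr hc).map C), ← Ideal.span_insert]

lemma itoNak_eq_or_eq_of_sq_eq_sq (ha : a ≠ 0) (hsq : a ^ 2 = b ^ 2) :
    itoNak n i a b = itoNak n i 1 1 ∨ itoNak n i a b = itoNak n i 1 (-1) := by
  have hscale := itoNak_mul_mul (n := n) (i := i) (a := 1) (b := b / a) ha
  rw [mul_one, mul_div_cancel₀ b ha] at hscale
  rw [hscale]
  rcases sq_eq_sq_iff_eq_or_eq_neg.mp hsq.symm with rfl | rfl <;> simp [ha]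

lemma itoNak_one_one_ne (hi : 1 ≤ i) (hin : i < n) : itoNak n i 1 1 ≠ itoNak n i 1 (-1) := by
  intro h
  have hmem : C 1 * X 0 ^ i - C (-1) * X 1 ^ (n - i) ∈ itoNak n i 1 1 := by
    rw [h]
    exact sub_mem_itoNak
  have := mul_eq_mul_of_mem_itoNak hi hin hmem
  norm_num at this

lemma map_tauA_itoNak_eq_iff (heven : Even n) (hi : 1 ≤ i) (hin : i < n) :
    Ideal.map tauA (itoNak n i a b) = itoNak n i a b ↔ 2 * i = n ∧ a ^ 2 = b ^ 2 := by
  rw [map_tauA_itoNak hin.le]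
  constructor
  · intro h
    have h2i : 2 * i = n := by
      have := le_add_one_of_itoNak_eq hi (Nat.sub_le n i) h
      have := le_add_one_of_itoNak_eq (by omega) hin.le h.symm
      obtain ⟨m, rfl⟩ := heven
      omega
    have hni : n - i = i := by omega
    have hsub : C b * X 0 ^ i - C a * X 1 ^ (n - i) ∈ itoNak n i a b := by
      have := sub_mem_itoNak (n := n) (i := n - i) (a := b) (b := a)
      rw [h, Nat.sub_sub_self hin.le, hni] at this
      rwa [hni]
    have := mul_eq_mul_of_mem_itoNak hi hin hsub
    exact ⟨h2i, by linear_combination -this⟩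
  · rintro ⟨h2i, hab⟩
    rw [(by omega : n - i = i)]
    rcases sq_eq_sq_iff_eq_or_eq_neg.mp hab.symm with rfl | rfl
    · rfl
    · simpa using itoNak_mul_mul (n := n) (i := i) (a := a) (b := -a) (neg_ne_zero.mpr one_ne_zero)

end ItoNakamura

/-- for even `n`, `τ` fixes `I_i(a,b)` iff `2i = n` and `a² = b²`; so there are
exactly two `τ`-fixed points on the exceptional locus, namely `I_{n/2}(1:1)` and
`I_{n/2}(1:−1)`. -/
theorem tau_fixed_points_even (n : ℕ) (hn : 1 ≤ n) (heven : Even n) :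
    (∀ i : ℕ, 1 ≤ i → i ≤ n - 1 → ∀ a b : ℂ, ¬(a = 0 ∧ b = 0) →
      (Ideal.map tauA (itoNak n i a b) = itoNak n i a b ↔ 2 * i = n ∧ a ^ 2 = b ^ 2)) ∧
    {J : Ideal (MvPolynomial (Fin 2) ℂ) |
        ∃ i : ℕ, ∃ a b : ℂ, 1 ≤ i ∧ i ≤ n - 1 ∧ ¬(a = 0 ∧ b = 0) ∧
          J = itoNak n i a b ∧ Ideal.map tauA J = J} =
      {itoNak n (n / 2) 1 1, itoNak n (n / 2) 1 (-1)} ∧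
    itoNak n (n / 2) 1 1 ≠ itoNak n (n / 2) 1 (-1) := by
  have hfix (i : ℕ) (hi : 1 ≤ i) (hin : i ≤ n - 1) (a b : ℂ) :
      Ideal.map tauA (itoNak n i a b) = itoNak n i a b ↔ 2 * i = n ∧ a ^ 2 = b ^ 2 :=
    map_tauA_itoNak_eq_iff heven hi (by omega)
  have hhalf : 1 ≤ n / 2 ∧ n / 2 ≤ n - 1 ∧ 2 * (n / 2) = n := by
    obtain ⟨m, rfl⟩ := heven
    omega
  refine ⟨fun i hi hin a b _ => hfix i hi hin a b, ?_, itoNak_one_one_ne hhalf.1 (by omega)⟩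
  ext J
  simp only [Set.mem_ofPred_eq, Set.mem_insert_iff, Set.mem_singleton_iff]
  constructor
  · rintro ⟨i, a, b, hi, hin, hab, rfl, hJ⟩
    obtain ⟨h2i, hsq⟩ := (hfix i hi hin a b).mp hJ
    obtain rfl : i = n / 2 := by omega
    have ha : a ≠ 0 := fun ha =>
      hab ⟨ha, pow_eq_zero_iff two_ne_zero |>.mp (by rw [← hsq, ha, zero_pow two_ne_zero])⟩
    exact itoNak_eq_or_eq_of_sq_eq_sq ha hsq
  · rintro (rfl | rfl) <;>
      exact ⟨n / 2, _, _, hhalf.1, hhalf.2.1, by norm_num, rfl,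
        (hfix _ hhalf.1 hhalf.2.1 _ _).mpr ⟨hhalf.2.2, by norm_num⟩⟩
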